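/- Let q be a homogeneous polynomial of degree n in n variables with nonnegative coefficients such that (1,...,1) ∈ CO(supp(q)). Then q(x₁,...,xₙ) ≥ Cap(q) · ∏ᵢ xᵢ for all positive vectors x, where Cap(q) = inf{q(α) : αᵢ > 0, ∏ αᵢ = 1} > 0. -/

import Mathlib

/-! For positive α the map y ↦ ∏ αᵢ ^ yᵢ = exp (∑ yᵢ log αᵢ) is convex in the exponent y, so on
the convex hull of the exponent vectors of q it is dominated by its value at one of them. At
y = (1,…,1) and ∏ αᵢ = 1 this yields a monomial m of q with α ^ m ≥ 1, hence q(α) is at least the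
smallest nonzero coefficient of q, and Cap(q) > 0. Homogeneity of degree n rescales any positive x
to x / (∏ xᵢ) ^ (1/n), whose coordinates have product 1. -/

open MvPolynomial

theorem MvPolynomial.IsHomogeneous.eval_smul {σ R : Type*} [CommSemiring R]
    {φ : MvPolynomial σ R} {m : ℕ} (hφ : φ.IsHomogeneous m) (c : R) (x : σ → R) :
    eval (c • x) φ = c ^ m * eval x φ := by
  rw [eval_eq, eval_eq, Finset.mul_sum]
  refine Finset.sum_congr rfl fun d hd => ?_
  have hdeg : ∑ i ∈ d.support, d i = m := by
    rw [← hφ (mem_support_iff.mp hd), Finsupp.weight_apply, Finsupp.sum]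
    simp
  simp only [Pi.smul_apply, smul_eq_mul, mul_pow, Finset.prod_mul_distrib,
    Finset.prod_pow_eq_pow_sum, hdeg]
  ring

open Real in
theorem convexOn_prod_rpow {σ : Type*} [Fintype σ] {α : σ → ℝ} (hα : ∀ i, 0 < α i) :
    ConvexOn ℝ Set.univ (fun y : σ → ℝ => ∏ i, α i ^ y i) := by
  have : (fun y : σ → ℝ => ∏ i, α i ^ y i) =
      exp ∘ (∑ i, log (α i) • LinearMap.proj i : (σ → ℝ) →ₗ[ℝ] ℝ) := by
    funext y
    simp [rpow_def_of_pos (hα _), ← exp_sum, mul_comm]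
  rw [this]
  exact convexOn_exp.comp_linearMap _

theorem exists_prod_rpow_le_prod_pow_of_mem_convexHull {σ : Type*} [Fintype σ]
    {s : Set (σ →₀ ℕ)} {y : σ → ℝ}
    (hy : y ∈ convexHull ℝ ((fun (r : σ →₀ ℕ) (i : σ) => (r i : ℝ)) '' s))
    {α : σ → ℝ} (hα : ∀ i, 0 < α i) : ∃ m ∈ s, ∏ i, α i ^ y i ≤ ∏ i, α i ^ m i := by
  obtain ⟨_, ⟨m, hm, rfl⟩, h⟩ :=
    (convexOn_prod_rpow hα).exists_ge_of_mem_convexHull (Set.subset_univ _) hy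
  exact ⟨m, hm, by simpa only [Real.rpow_natCast] using h⟩

theorem MvPolynomial.coeff_mul_prod_pow_le_eval {σ : Type*} [Fintype σ] {q : MvPolynomial σ ℝ}
    (hcoeff : ∀ m, 0 ≤ q.coeff m) {x : σ → ℝ} (hx : ∀ i, 0 ≤ x i) {m : σ →₀ ℕ}
    (hm : m ∈ q.support) : q.coeff m * ∏ i, x i ^ m i ≤ eval x q := by
  rw [eval_eq']
  exact Finset.single_le_sum (f := fun d => q.coeff d * ∏ i, x i ^ d i)
    (fun d _ => mul_nonneg (hcoeff d) (Finset.prod_nonneg fun i _ => pow_nonneg (hx i) _)) hm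

theorem MvPolynomial.exists_pos_forall_le_eval_of_one_mem_convexHull {σ : Type*} [Fintype σ]
    {q : MvPolynomial σ ℝ} (hcoeff : ∀ m, 0 ≤ q.coeff m)
    (hone : (fun _ => (1 : ℝ)) ∈
      convexHull ℝ ((fun (r : σ →₀ ℕ) (i : σ) => (r i : ℝ)) '' ↑q.support)) :
    ∃ c > 0, ∀ α : σ → ℝ, (∀ i, 0 < α i) → ∏ i, α i = 1 → c ≤ eval α q := by
  have hsupp : q.support.Nonempty := by
    simpa using convexHull_nonempty_iff.mp ⟨_, hone⟩
  refine ⟨q.support.inf' hsupp q.coeff,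
    (Finset.lt_inf'_iff _).mpr fun m hm => (hcoeff m).lt_of_ne' (mem_support_iff.mp hm),
    fun α hα hprod => ?_⟩
  obtain ⟨m, hm, hmono⟩ := exists_prod_rpow_le_prod_pow_of_mem_convexHull hone hα
  simp only [Real.rpow_one, hprod] at hmono
  calc q.support.inf' hsupp q.coeff ≤ q.coeff m := Finset.inf'_le _ hm
    _ ≤ q.coeff m * ∏ i, α i ^ m i := le_mul_of_one_le_right (hcoeff m) hmono
    _ ≤ eval α q := coeff_mul_prod_pow_le_eval hcoeff (fun i => (hα i).le) hm

theorem MvPolynomial.IsHomogeneous.exists_eval_eq_prod_mul {σ : Type*} [Fintype σ]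
    {q : MvPolynomial σ ℝ} (hq : q.IsHomogeneous (Fintype.card σ)) {x : σ → ℝ}
    (hx : ∀ i, 0 < x i) :
    ∃ α : σ → ℝ, (∀ i, 0 < α i) ∧ ∏ i, α i = 1 ∧ eval x q = (∏ i, x i) * eval α q := by
  set P := ∏ i, x i
  have hP : 0 < P := Finset.prod_pos fun i _ => hx i
  set c := P ^ (Fintype.card σ : ℝ)⁻¹
  have hc : 0 < c := Real.rpow_pos_of_pos hP _
  have hcn : c ^ Fintype.card σ = P := by
    rcases isEmpty_or_nonempty σ with hσ | hσ
    · simp [P]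
    · exact Real.rpow_inv_natCast_pow hP.le Fintype.card_ne_zero
  refine ⟨c⁻¹ • x, fun i => mul_pos (inv_pos.mpr hc) (hx i), ?_, ?_⟩
  · simp only [Pi.smul_apply, smul_eq_mul, Finset.prod_mul_distrib, Finset.prod_const,
      Finset.card_univ, inv_pow, hcn]
    exact inv_mul_cancel₀ hP.ne'
  · rw [hq.eval_smul, ← hcn, inv_pow, mul_inv_cancel_left₀ (pow_ne_zero _ hc.ne')]

theorem stmt8 (n : ℕ) (q : MvPolynomial (Fin n) ℝ) (hq : q.IsHomogeneous n)
    (hcoeff : ∀ m, 0 ≤ q.coeff m)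
    (hone : (fun _ => (1 : ℝ)) ∈
      convexHull ℝ ((fun (r : Fin n →₀ ℕ) (i : Fin n) => (r i : ℝ)) '' ↑q.support)) :
    0 < sInf {t : ℝ | ∃ α : Fin n → ℝ, (∀ i, 0 < α i) ∧ ∏ i, α i = 1 ∧ t = eval α q} ∧
    ∀ x : Fin n → ℝ, (∀ i, 0 < x i) →
      sInf {t : ℝ | ∃ α : Fin n → ℝ, (∀ i, 0 < α i) ∧ ∏ i, α i = 1 ∧ t = eval α q} *
          ∏ i, x i ≤ eval x q := by
  set S := {t : ℝ | ∃ α : Fin n → ℝ, (∀ i, 0 < α i) ∧ ∏ i, α i = 1 ∧ t = eval α q}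
  obtain ⟨c, hc, hle⟩ := exists_pos_forall_le_eval_of_one_mem_convexHull hcoeff hone
  have hlower : c ∈ lowerBounds S := by
    rintro _ ⟨α, hα, hprod, rfl⟩
    exact hle α hα hprod
  have hS : S.Nonempty := ⟨_, fun _ => 1, fun _ => one_pos, by simp, rfl⟩
  refine ⟨hc.trans_le (le_csInf hS hlower), fun x hx => ?_⟩
  obtain ⟨α, hα, hprod, heval⟩ :=
    IsHomogeneous.exists_eval_eq_prod_mul (by rwa [Fintype.card_fin]) hx
  rw [heval, mul_comm]
  exact mul_le_mul_of_nonneg_left (csInf_le ⟨c, hlower⟩ ⟨α, hα, hprod, rfl⟩)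
    (Finset.prod_nonneg fun i _ => (hx i).le)
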